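/- arXiv:2204.10303 — 5 statements merged into one kernel-verified Lean document; each statement's English description precedes it below -/
import Mathlib

section
/- Soundness of modular verification: if the interface A satisfies the initial condition (init v ∈ A v 0 for all nodes v) and the inductive condition (for all t and all choices of routes s_u ∈ A u t for each in-neighbor u of v, the merge of init v with the transferred routes T(u,v)(s_u) lies in A v (t+1)), then the simulation state is always included in the interface: for all nodes v and all times t, σ v t ∈ A v t. -/
/-- A network instance: in-neighbors, initial routes, edge transfer functions
and a merge (selection) function. -/
structure Network (V : Type) (S : Type) where
  pred : V → List V
  init : V → S
  T : V → V → S → S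
  merge : S → S → S

/-- The route computed at `v` from neighbor states `s`:
`init v` merged with the transferred routes of the in-neighbors. -/
def mergedState {V S : Type} (N : Network V S) (v : V) (s : V → S) : S :=
  (N.pred v).foldr (fun u acc => N.merge (N.T u v (s u)) acc) (N.init v)

/-- The synchronous simulation state. -/
def sim {V S : Type} (N : Network V S) : ℕ → V → S
  | 0, v => N.init v
  | t + 1, v => mergedState N v (sim N t)

/-- Initial verification condition. -/
def InitCond {V S : Type} (N : Network V S) (A : V → ℕ → Set S) : Prop :=
  ∀ v, N.init v ∈ A v 0

/-- Inductive verification condition. -/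
def IndCond {V S : Type} (N : Network V S) (A : V → ℕ → Set S) : Prop :=
  ∀ v (t : ℕ) (s : V → S), (∀ u ∈ N.pred v, s u ∈ A u t) →
    mergedState N v s ∈ A v (t + 1)

/-- Soundness: a valid interface always includes the simulation state. -/
theorem soundness {V S : Type} (N : Network V S)
    (hcomm : ∀ a b, N.merge a b = N.merge b a)
    (hassoc : ∀ a b c, N.merge (N.merge a b) c = N.merge a (N.merge b c))
    (A : V → ℕ → Set S)
    (hinit : InitCond N A) (hind : IndCond N A) :
    ∀ v (t : ℕ), sim N t v ∈ A v t := by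
  intro v t
  induction t generalizing v with
  | zero => exact hinit v
  | succ t ih => exact hind v t (sim N t) (fun u _ => ih u)
end

section
/- Safety: if the interface A satisfies the initial and inductive conditions for all nodes, and a property P : V → ℕ → Set S satisfies the safety condition A v t ⊆ P v t for all v and t, then the simulation state satisfies the property: σ v t ∈ P v t for all nodes v and times t. -/
/-- Safety: a valid interface that is pointwise included in a property
implies the simulation state satisfies the property. -/
theorem safety {V S : Type} (N : Network V S)
    (A P : V → ℕ → Set S)
    (hinit : InitCond N A) (hind : IndCond N A)
    (hsafe : ∀ v (t : ℕ), A v t ⊆ P v t) :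
    ∀ v (t : ℕ), sim N t v ∈ P v t := by
  have hA : ∀ (t : ℕ) v, sim N t v ∈ A v t := by
    intro t
    induction t with
    | zero => exact fun v => hinit v
    | succ t ih => exact fun v => hind v t (sim N t) (fun u _ => ih u)
  exact fun v t => hsafe v t (hA t v)
end

section
/- Soundness of the delayed inductive condition: if interface A satisfies the initial condition, and additionally A v 1 contains σ v 1 for all v, and the one-step-delay inductive condition holds (for all t, all choices s_u ∈ A u t ∪ A u (t+1) for each in-neighbor u of v, the merge of init v with the transferred routes lies in A v (t+2)), then the synchronous simulation state satisfies σ v t ∈ A v t for all nodes v and all times t. -/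
/-- Soundness of the one-step-delay inductive condition. -/
theorem delayed_soundness {V S : Type} (N : Network V S)
    (A : V → ℕ → Set S)
    (hinit : InitCond N A)
    (hone : ∀ v, sim N 1 v ∈ A v 1)
    (hdind : ∀ v (t : ℕ) (s : V → S),
      (∀ u ∈ N.pred v, s u ∈ A u t ∪ A u (t + 1)) →
      mergedState N v s ∈ A v (t + 2)) :
    ∀ v (t : ℕ), sim N t v ∈ A v t := by
  intro v t
  induction t using Nat.strong_induction_on generalizing v with
  | _ t ih =>
    match t with
    | 0 => exact hinit v
    | 1 => exact hone v
    | (t + 2) =>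
      show mergedState N v (sim N (t + 1)) ∈ A v (t + 2)
      exact hdind v t _ (fun u _ => Or.inr (ih (t + 1) (by omega) u))
end

section
/- Distance-based reachability in a strongly connected graph under a reachability semiring: model routes as S = Option ℕ (hop count), with init d = some 0 at a designated destination d and none elsewhere, transfer on every edge mapping some n to some (n+1) and none to none, and merge taking the minimum (none is identity). Then for every node v, σ v t = some (dist(d,v)) for all t ≥ dist(d,v), where dist(d,v) is the length of the shortest directed path from d to v; in particular the interface A v = Finally_{dist(d,v)} Globally({s : s ≠ none}) satisfies the initial and inductive conditions. -/
/-- The `globally` temporal operator. -/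
def Globally {S : Type} (φ : Set S) : ℕ → Set S := fun _ => φ

/-- The `until` temporal operator with witness time `τ`. -/
def UntilOp {S : Type} (τ : ℕ) (φ : Set S) (Q : ℕ → Set S) : ℕ → Set S :=
  fun t => if t < τ then φ else Q t

/-- The `finally` temporal operator with witness time `τ`. -/
def FinallyOp {S : Type} (τ : ℕ) (Q : ℕ → Set S) : ℕ → Set S :=
  UntilOp τ Set.univ Q

/-- Min-merge on hop counts: none is identity, minimum otherwise. -/
def omin : Option ℕ → Option ℕ → Option ℕ
  | none, b => b
  | some a, none => some a
  | some a, some b => some (min a b)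

/-- The hop-count (reachability semiring) network with destination d. -/
def distNet {V : Type} [DecidableEq V] (pred : V → List V) (d : V) :
    Network V (Option ℕ) :=
  ⟨pred, fun v => if v = d then some 0 else none,
    fun _ _ r => r.map (· + 1), omin⟩

/-!
Routes only ever record lengths of actual walks from `d`, so `sim t v = some m` forces
`dist v ≤ m`. Conversely, a node other than `d` has an in-neighbour one hop closer to `d`,
so by induction on `t` every node with `dist v ≤ t` already holds a hop count at most
`dist v`. The same in-neighbour makes the interface inductive: once `dist v ≤ t + 1`,
it held a route at time `t`, which `v` then extends.
-/

structure IsHopDist {V : Type} (pred : V → List V) (d : V) (dist : V → ℕ) : Prop where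
  exists_path : ∀ v, ∃ p : ℕ → V, p 0 = d ∧ p (dist v) = v ∧
    ∀ i < dist v, p i ∈ pred (p (i + 1))
  le_of_path : ∀ v (k : ℕ) (p : ℕ → V), p 0 = d → p k = v →
    (∀ i < k, p i ∈ pred (p (i + 1))) → dist v ≤ k

namespace IsHopDist

variable {V : Type} {pred : V → List V} {d : V} {dist : V → ℕ}

theorem dist_self (h : IsHopDist pred d dist) : dist d = 0 :=
  Nat.le_zero.mp (h.le_of_path d 0 (fun _ => d) rfl rfl (by omega))

theorem eq_of_dist_eq_zero (h : IsHopDist pred d dist) {v : V} (hv : dist v = 0) : v = d := by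
  obtain ⟨p, hp0, hpv, -⟩ := h.exists_path v
  rw [← hpv, hv, hp0]

theorem dist_le_succ_of_mem_pred (h : IsHopDist pred d dist) {u v : V} (huv : u ∈ pred v) :
    dist v ≤ dist u + 1 := by
  obtain ⟨p, hp0, hpu, hpe⟩ := h.exists_path u
  refine h.le_of_path v (dist u + 1) (fun i => if i ≤ dist u then p i else v)
    (by simp [hp0]) (by simp) fun i hi => ?_
  rcases Nat.lt_or_ge i (dist u) with hlt | hge
  · simpa only [if_pos hlt.le, if_pos (Nat.succ_le_of_lt hlt)] using hpe i hlt
  · obtain rfl : i = dist u := by omega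
    simpa only [le_refl, if_true, Nat.not_succ_le_self, if_false, hpu] using huv

theorem exists_mem_pred_dist_succ_eq (h : IsHopDist pred d dist) {v : V} (hv : v ≠ d) :
    ∃ u ∈ pred v, dist u + 1 = dist v := by
  obtain ⟨p, hp0, hpv, hpe⟩ := h.exists_path v
  obtain ⟨k, hk⟩ : ∃ k, dist v = k + 1 :=
    Nat.exists_eq_succ_of_ne_zero fun h0 => hv (h.eq_of_dist_eq_zero h0)
  have hmem : p k ∈ pred v := by
    have := hpe k (by omega)
    rwa [← hk, hpv] at this
  have hle : dist (p k) ≤ k := h.le_of_path _ k p hp0 rfl fun i hi => hpe i (by omega)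
  exact ⟨p k, hmem, by have := h.dist_le_succ_of_mem_pred hmem; omega⟩

end IsHopDist

section omin

theorem omin_eq_some {a b : Option ℕ} {m : ℕ} (h : omin a b = some m) :
    a = some m ∨ b = some m := by
  match a, b with
  | none, _ => exact Or.inr h
  | some _, none => exact Or.inl h
  | some x, some y =>
    simp only [omin, Option.some.injEq] at h ⊢
    omega

theorem exists_le_omin_some_left (a : ℕ) (b : Option ℕ) : ∃ m ≤ a, omin (some a) b = some m := by
  cases b with
  | none => exact ⟨a, le_rfl, rfl⟩
  | some b => exact ⟨min a b, min_le_left a b, rfl⟩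

theorem exists_le_omin_some_right (a : Option ℕ) (b : ℕ) : ∃ m ≤ b, omin a (some b) = some m := by
  cases a with
  | none => exact ⟨b, le_rfl, rfl⟩
  | some a => exact ⟨min a b, min_le_right a b, rfl⟩

variable {V : Type} (f : V → Option ℕ)

theorem foldr_omin_eq_some {l : List V} {a : Option ℕ} {m : ℕ}
    (h : l.foldr (fun u acc => omin (f u) acc) a = some m) :
    (∃ u ∈ l, f u = some m) ∨ a = some m := by
  induction l with
  | nil => exact Or.inr h
  | cons x l ih =>
    rcases omin_eq_some h with hx | hl
    · exact Or.inl ⟨x, List.mem_cons_self, hx⟩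
    · exact (ih hl).imp_left fun ⟨u, hu, hfu⟩ => ⟨u, List.mem_cons_of_mem x hu, hfu⟩

theorem exists_le_foldr_omin_some (l : List V) (n : ℕ) :
    ∃ m ≤ n, l.foldr (fun u acc => omin (f u) acc) (some n) = some m := by
  induction l with
  | nil => exact ⟨n, le_rfl, rfl⟩
  | cons x l ih =>
    obtain ⟨m, hmn, hm⟩ := ih
    obtain ⟨m', hm'm, hm'⟩ := exists_le_omin_some_right (f x) m
    exact ⟨m', hm'm.trans hmn, by rw [List.foldr_cons, hm, hm']⟩

theorem exists_le_foldr_omin_of_mem {l : List V} {u : V} {n : ℕ} (a : Option ℕ)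
    (hu : u ∈ l) (hfu : f u = some n) :
    ∃ m ≤ n, l.foldr (fun u acc => omin (f u) acc) a = some m := by
  induction l with
  | nil => exact absurd hu List.not_mem_nil
  | cons x l ih =>
    rw [List.foldr_cons]
    rcases List.mem_cons.mp hu with rfl | hu
    · rw [hfu]
      exact exists_le_omin_some_left n _
    · obtain ⟨m, hmn, hm⟩ := ih hu
      obtain ⟨m', hm'm, hm'⟩ := exists_le_omin_some_right (f x) m
      exact ⟨m', hm'm.trans hmn, by rw [hm, hm']⟩

end omin

theorem mem_finallyOp_globally {S : Type} {τ t : ℕ} {φ : Set S} {x : S} :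
    x ∈ FinallyOp τ (Globally φ) t ↔ (τ ≤ t → x ∈ φ) := by
  simp only [FinallyOp, UntilOp, Globally]
  split_ifs with ht
  · simp [ht]
  · simp [Nat.le_of_not_lt ht]

section distNet

variable {V : Type} [DecidableEq V] {pred : V → List V} {d : V}

theorem mergedState_distNet_self (s : V → Option ℕ) :
    mergedState (distNet pred d) d s = some 0 := by
  obtain ⟨m, hm, h⟩ := exists_le_foldr_omin_some (fun u => (s u).map (· + 1)) (pred d) 0
  rw [Nat.le_zero.mp hm] at h
  simpa [mergedState, distNet] using h

theorem exists_le_mergedState_distNet {s : V → Option ℕ} {u v : V} {n : ℕ}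
    (huv : u ∈ pred v) (hsu : s u = some n) :
    ∃ m ≤ n + 1, mergedState (distNet pred d) v s = some m :=
  exists_le_foldr_omin_of_mem (fun w => (s w).map (· + 1)) _ huv (by simp [hsu])

theorem sim_distNet_self (t : ℕ) : sim (distNet pred d) t d = some 0 := by
  cases t with
  | zero => simp [sim, distNet]
  | succ t => exact mergedState_distNet_self _

namespace IsHopDist

variable {dist : V → ℕ}

theorem dist_le_of_mergedState_distNet_eq_some (h : IsHopDist pred d dist) {s : V → Option ℕ}
    (hs : ∀ u n, s u = some n → dist u ≤ n) {v : V} {m : ℕ}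
    (hm : mergedState (distNet pred d) v s = some m) : dist v ≤ m := by
  rcases foldr_omin_eq_some (fun w => (s w).map (· + 1)) hm with ⟨u, hu, hsu⟩ | hinit
  · obtain ⟨n, hn, rfl⟩ := Option.map_eq_some_iff.mp hsu
    have := h.dist_le_succ_of_mem_pred hu
    have := hs u n hn
    omega
  · have hv : v = d := by by_contra hv; simp [distNet, hv] at hinit
    simp [h.dist_self, hv]

theorem dist_le_of_sim_distNet_eq_some (h : IsHopDist pred d dist) {t : ℕ} :
    ∀ {v : V} {m : ℕ}, sim (distNet pred d) t v = some m → dist v ≤ m := by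
  induction t with
  | zero =>
    intro v m hm
    have hv : v = d := by by_contra hv; simp [sim, distNet, hv] at hm
    simp [h.dist_self, hv]
  | succ t ih => exact h.dist_le_of_mergedState_distNet_eq_some fun _ _ => ih

theorem exists_le_sim_distNet (h : IsHopDist pred d dist) {t : ℕ} :
    ∀ {v : V}, dist v ≤ t → ∃ m ≤ dist v, sim (distNet pred d) t v = some m := by
  induction t with
  | zero =>
    intro v hv
    rw [h.eq_of_dist_eq_zero (Nat.le_zero.mp hv)]
    exact ⟨0, Nat.zero_le _, sim_distNet_self 0⟩
  | succ t ih =>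
    intro v hvt
    by_cases hvd : v = d
    · subst hvd
      exact ⟨0, Nat.zero_le _, sim_distNet_self _⟩
    obtain ⟨u, hu, hdu⟩ := h.exists_mem_pred_dist_succ_eq hvd
    obtain ⟨n, hn, hsu⟩ := ih (v := u) (by omega)
    obtain ⟨m, hm, hsv⟩ := exists_le_mergedState_distNet hu hsu
    exact ⟨m, by omega, hsv⟩

theorem sim_distNet_eq_some_dist (h : IsHopDist pred d dist) {v : V} {t : ℕ}
    (ht : dist v ≤ t) : sim (distNet pred d) t v = some (dist v) := by
  obtain ⟨m, hm, hsv⟩ := h.exists_le_sim_distNet ht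
  rwa [le_antisymm hm (h.dist_le_of_sim_distNet_eq_some hsv)] at hsv

theorem initCond_distNet (h : IsHopDist pred d dist) :
    InitCond (distNet pred d) (fun v => FinallyOp (dist v) (Globally {s | s ≠ none})) :=
  fun v => mem_finallyOp_globally.mpr fun hv => by
    show sim (distNet pred d) 0 v ≠ none
    simp [h.sim_distNet_eq_some_dist hv]

theorem indCond_distNet (h : IsHopDist pred d dist) :
    IndCond (distNet pred d) (fun v => FinallyOp (dist v) (Globally {s | s ≠ none})) := by
  intro v t s hs
  refine mem_finallyOp_globally.mpr fun hvt => ?_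
  by_cases hvd : v = d
  · simp [hvd, mergedState_distNet_self]
  obtain ⟨u, hu, hdu⟩ := h.exists_mem_pred_dist_succ_eq hvd
  obtain ⟨n, hn⟩ := Option.ne_none_iff_exists'.mp
    (mem_finallyOp_globally.mp (hs u hu) (by omega))
  obtain ⟨m, -, hm⟩ := exists_le_mergedState_distNet (d := d) hu hn
  simp [hm]

end IsHopDist

end distNet

/-- Distance-based reachability: every node v stabilizes to some (dist v)
from time dist v onward, and the Finally/Globally distance interface is valid. -/
theorem dist_reachability {V : Type} [DecidableEq V]
    (pred : V → List V) (d : V) (dist : V → ℕ)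
    (hpath : ∀ v, ∃ p : ℕ → V, p 0 = d ∧ p (dist v) = v ∧
      ∀ i < dist v, p i ∈ pred (p (i + 1)))
    (hmin : ∀ v (k : ℕ) (p : ℕ → V), p 0 = d → p k = v →
      (∀ i < k, p i ∈ pred (p (i + 1))) → dist v ≤ k) :
    (∀ v (t : ℕ), dist v ≤ t → sim (distNet pred d) t v = some (dist v)) ∧
    InitCond (distNet pred d)
      (fun v => FinallyOp (dist v) (Globally {s | s ≠ none})) ∧
    IndCond (distNet pred d)
      (fun v => FinallyOp (dist v) (Globally {s | s ≠ none})) :=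
  have h : IsHopDist pred d dist := ⟨hpath, hmin⟩
  ⟨fun _ _ => h.sim_distNet_eq_some_dist, h.initCond_distNet, h.indCond_distNet⟩
end

section
/- Ghost-state soundness for origin tracking: extend routes with a Boolean ghost field 'fromw' that is true in init only at node w, preserved by every transfer function, and such that merge always returns one of its two arguments. If the projection of the extended network (erasing the ghost field) coincides with the original network's simulation, then whenever the extended simulation state at a node v at time t has fromw = true, the underlying (ghost-erased) route of v at time t equals the ghost-erased image of a route whose origin traces back to w, i.e., there is a sequence of nodes v = v_t, v_{t-1}, …, v_0 = w with each consecutive pair connected by an edge (or equal), along which the route was produced. -/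
theorem List.foldr_mem_cons_map_of_selective {α β : Type*} (m : α → α → α)
    (hsel : ∀ x y, m x y = x ∨ m x y = y) (f : β → α) (a : α) (l : List β) :
    l.foldr (fun u acc => m (f u) acc) a ∈ a :: l.map f := by
  induction l with
  | nil => simp
  | cons x xs ih =>
    rw [List.foldr_cons]
    rcases hsel (f x) (xs.foldr (fun u acc => m (f u) acc) a) with h | h <;> rw [h]
    · simp
    · simp only [List.mem_cons, List.map_cons] at ih ⊢
      tauto

namespace Network

variable {V S : Type}

theorem mergedState_eq_init_or_transfer (N : Network V S)
    (hsel : ∀ x y, N.merge x y = x ∨ N.merge x y = y) (v : V) (s : V → S) :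
    mergedState N v s = N.init v ∨ ∃ u ∈ N.pred v, mergedState N v s = N.T u v (s u) := by
  have hmem := List.foldr_mem_cons_map_of_selective N.merge hsel
    (fun u => N.T u v (s u)) (N.init v) (N.pred v)
  simp only [List.mem_cons, List.mem_map] at hmem
  rcases hmem with h | ⟨u, hu, h⟩
  · exact Or.inl h
  · exact Or.inr ⟨u, hu, h.symm⟩

def PathFrom (N : Network V S) (w v : V) (t : ℕ) : Prop :=
  ∃ p : ℕ → V, p 0 = w ∧ p t = v ∧ ∀ i < t, p (i + 1) = p i ∨ p i ∈ N.pred (p (i + 1))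

theorem PathFrom.refl (N : Network V S) (w : V) (t : ℕ) : N.PathFrom w w t :=
  ⟨fun _ => w, rfl, rfl, fun _ _ => Or.inl rfl⟩

theorem PathFrom.snoc {N : Network V S} {w u v : V} {t : ℕ} (h : N.PathFrom w u t)
    (hu : u ∈ N.pred v) : N.PathFrom w v (t + 1) := by
  obtain ⟨p, hp0, hpt, hstep⟩ := h
  refine ⟨fun i => if i ≤ t then p i else v, by simp [hp0], by simp, fun i hi => ?_⟩
  rcases Nat.lt_succ_iff_lt_or_eq.mp hi with hi | rfl
  · simpa only [if_pos (Nat.succ_le_of_lt hi), if_pos hi.le] using hstep i hi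
  · simpa only [if_neg (Nat.not_succ_le_self i), if_pos le_rfl, hpt] using Or.inr hu

theorem pathFrom_of_sim_snd_eq {B : Type} (N : Network V (S × B)) (w : V) (mark : B)
    (hinit : ∀ v, (N.init v).2 = mark → v = w)
    (hT : ∀ u v x, (N.T u v x).2 = x.2)
    (hsel : ∀ x y, N.merge x y = x ∨ N.merge x y = y) :
    ∀ t v, (sim N t v).2 = mark → N.PathFrom w v t
  | 0, v, h => hinit v h ▸ PathFrom.refl N w 0
  | t + 1, v, h => by
    rcases mergedState_eq_init_or_transfer N hsel v (sim N t) with heq | ⟨u, hu, heq⟩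
    · rw [sim, heq] at h
      exact hinit v h ▸ PathFrom.refl N w (t + 1)
    · rw [sim, heq, hT] at h
      exact (pathFrom_of_sim_snd_eq N w mark hinit hT hsel t u h).snoc hu

end Network

theorem ghost_provenance_general {V S : Type} [DecidableEq V]
    (N : Network V S) (w : V) (N' : Network V (S × Bool))
    (hpred : N'.pred = N.pred)
    (hinit : ∀ v, N'.init v = (N.init v, decide (v = w)))
    (hT : ∀ u v (s : S) (b : Bool), N'.T u v (s, b) = (N.T u v s, b))
    (hsel : ∀ x y : S × Bool, N'.merge x y = x ∨ N'.merge x y = y)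
    (v : V) (t : ℕ) (h : (sim N' t v).2 = true) :
    ∃ p : ℕ → V, p 0 = w ∧ p t = v ∧
      ∀ i < t, p (i + 1) = p i ∨ p i ∈ N.pred (p (i + 1)) := by
  have hpath : N'.PathFrom w v t :=
    Network.pathFrom_of_sim_snd_eq N' w true (fun v hv => by simpa [hinit] using hv)
      (fun u v x => by rw [hT]) hsel t v h
  simpa only [Network.PathFrom, hpred] using hpath

/-- Ghost-state soundness for origin tracking: if the ghost 'fromw' flag of
the extended simulation is set at node v at time t, there is a propagation
path from w to v of length t in the graph (allowing self-stays). -/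
theorem ghost_provenance {V S : Type} [DecidableEq V]
    (N : Network V S) (w : V) (N' : Network V (S × Bool))
    (hpred : N'.pred = N.pred)
    (hinit : ∀ v, N'.init v = (N.init v, decide (v = w)))
    (hT : ∀ u v (s : S) (b : Bool), N'.T u v (s, b) = (N.T u v s, b))
    (hsel : ∀ x y : S × Bool, N'.merge x y = x ∨ N'.merge x y = y)
    (hproj : ∀ x y : S × Bool, (N'.merge x y).1 = N.merge x.1 y.1)
    (hsim : ∀ (t : ℕ) (v : V), (sim N' t v).1 = sim N t v)
    (v : V) (t : ℕ) (h : (sim N' t v).2 = true) :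
    ∃ p : ℕ → V, p 0 = w ∧ p t = v ∧
      ∀ i < t, p (i + 1) = p i ∨ p i ∈ N.pred (p (i + 1)) :=
  ghost_provenance_general N w N' hpred hinit hT hsel v t h
end
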